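/- arXiv:1010.6119 — 6 statements merged into one kernel-verified Lean document; each statement's English description precedes it below -/
import Mathlib

section
/- For n ≥ 1 and each nonnegative integer i, the number of compositions of n into odd parts having exactly n - 2i parts equals the binomial coefficient C(n-1-i, i). Equivalently, Σ_{γ ∈ F_n} q^{(n-k(γ))/2} = Σ_{i≥0} C(n-1-i, i) q^i. -/
/-!
Writing the parts of an odd composition of `k + 2 i` into `k` parts as `2 P j + 1` identifies
these compositions with the `k`-tuples of naturals summing to `i`, which stars and bars counts
as `C(k + i - 1, i)`. For `k = n - 2 i` this is `C(n - 1 - i, i)`; when `2 i > n` both sides vanish.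
-/

open Finset

theorem Nat.card_fun_sum_eq_choose (α : Type*) [Fintype α] (n : ℕ) :
    Nat.card {P : α → ℕ // ∑ a, P a = n} = (Fintype.card α + n - 1).choose n := by
  classical
  rw [← Nat.card_congr (Sym.equivNatSumOfFintype α n), Nat.card_eq_fintype_card,
    Sym.card_sym_eq_choose]

namespace Composition

def ofOddTuple {k i : ℕ} (P : Fin k → ℕ) (hP : ∑ j, P j = i) : Composition (k + 2 * i) where
  blocks := List.ofFn fun j => 2 * P j + 1
  blocks_pos := by simp
  blocks_sum := by simp [List.sum_ofFn, sum_add_distrib, ← mul_sum, hP, add_comm]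

theorem two_mul_sum_blocksFun_div_two_add_length {n : ℕ} (c : Composition n)
    (hc : ∀ x ∈ c.blocks, Odd x) : 2 * ∑ j, c.blocksFun j / 2 + c.length = n := by
  calc 2 * ∑ j, c.blocksFun j / 2 + c.length = ∑ j, (2 * (c.blocksFun j / 2) + 1) := by
        simp [sum_add_distrib, mul_sum]
    _ = n := by
        simp_rw [Nat.two_mul_div_two_add_one_of_odd (hc _ (c.blocksFun_mem_blocks _))]
        exact c.sum_blocksFun

def oddOfLengthEquiv (k i : ℕ) :
    {c : Composition (k + 2 * i) // (∀ x ∈ c.blocks, Odd x) ∧ c.length = k} ≃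
      {P : Fin k → ℕ // ∑ j, P j = i} where
  toFun c := ⟨fun j => c.1.blocksFun (Fin.cast c.2.2.symm j) / 2, by
    have := c.1.two_mul_sum_blocksFun_div_two_add_length c.2.1
    rw [Fin.sum_congr' (fun j => c.1.blocksFun j / 2) c.2.2.symm]
    omega⟩
  invFun P := ⟨ofOddTuple P.1 P.2, by simp [ofOddTuple], by simp [ofOddTuple, length]⟩
  left_inv := by
    rintro ⟨c, hodd, hlen⟩
    ext1; ext1
    refine List.ext_getElem (by simp [ofOddTuple, hlen]) fun j _ _ => ?_
    simp [ofOddTuple, blocksFun, Nat.two_mul_div_two_add_one_of_odd (hodd _ (List.getElem_mem _))]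
  right_inv := by
    rintro ⟨P, hP⟩
    ext j
    simp [ofOddTuple, blocksFun, Nat.mul_add_div]; rfl

theorem card_odd_length_eq_choose (k i : ℕ) :
    #{c : Composition (k + 2 * i) | (∀ x ∈ c.blocks, Odd x) ∧ c.length = k}
      = (k + i - 1).choose i := by
  rw [← Fintype.card_subtype, ← Nat.card_eq_fintype_card, Nat.card_congr (oddOfLengthEquiv k i),
    Nat.card_fun_sum_eq_choose, Fintype.card_fin]

end Composition

/-- For `n ≥ 1`, the number of compositions of `n` into odd parts with
exactly `n - 2i` parts equals the binomial coefficient `C(n-1-i, i)`. -/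
theorem card_odd_compositions_fixed_length (n : ℕ) (hn : 1 ≤ n) (i : ℕ) :
    (Finset.univ.filter (fun c : Composition n =>
        (∀ x ∈ c.blocks, Odd x) ∧ c.length = n - 2 * i)).card
      = Nat.choose (n - 1 - i) i := by
  rcases le_or_gt (2 * i) n with h | h
  · obtain ⟨k, rfl⟩ : ∃ k, n = k + 2 * i := ⟨n - 2 * i, by omega⟩
    rw [Nat.add_sub_cancel, Composition.card_odd_length_eq_choose]
    congr 1
    omega
  · rw [Nat.choose_eq_zero_of_lt (by omega), card_eq_zero, filter_eq_empty_iff]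
    rintro c - ⟨-, hlen⟩
    rw [Nat.sub_eq_zero_of_le h.le, Composition.length_eq_zero] at hlen
    omega
end

section
/- Let N be the n×n nilpotent Jordan block with ones on the superdiagonal and zeros elsewhere, with n even. Then there is no invertible symmetric n×n matrix A over a field of characteristic 0 satisfying Nᵀ A + A N = 0. -/
/-!
The relation `Nᵀ A + A N = 0` says that `N` is skew for the bilinear form `A`, so `A N ^ k = (-Nᵀ) ^ k A`
for every `k`. For `k = n - 1` the power `N ^ (n - 1)` is the matrix unit `E₀,ₙ₋₁`, and since `n - 1` is
odd this reads `A E₀,ₙ₋₁ = -Eₙ₋₁,₀ A`. Comparing the last columns shows that the first column of `A`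
vanishes, except possibly for `Aₙ₋₁,₀`, which equals `-A₀,ₙ₋₁ = -Aₙ₋₁,₀` by symmetry and hence vanishes
in characteristic `≠ 2`. So `A` has a zero column and cannot be invertible.
-/

open Matrix

def upperShift (R : Type*) [Zero R] [One R] (n : ℕ) : Matrix (Fin n) (Fin n) R :=
  of fun i j => if (i : ℕ) + 1 = j then 1 else 0

section upperShift

variable {R : Type*} [Semiring R]

theorem upperShift_pow_apply (n k : ℕ) (i j : Fin n) :
    (upperShift R n ^ k) i j = if (i : ℕ) + k = j then 1 else 0 := by
  induction k generalizing j with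
  | zero => simp [one_apply, Fin.ext_iff]
  | succ k ih =>
    simp only [pow_succ, mul_apply, ih]
    simp only [upperShift, of_apply, ite_mul, one_mul, zero_mul, ← ite_and]
    by_cases hij : (i : ℕ) + (k + 1) = j
    · rw [if_pos hij, Finset.sum_eq_single ⟨(i : ℕ) + k, by omega⟩]
      · simp only [true_and]
        exact if_pos (by omega)
      · intro l _ hl
        exact if_neg fun h => hl (Fin.ext h.1.symm)
      · simp
    · rw [if_neg hij]
      exact Finset.sum_eq_zero fun l _ => if_neg (by omega)

theorem upperShift_pow_self (m : ℕ) : upperShift R (m + 1) ^ m = single 0 (Fin.last m) 1 := by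
  ext i j
  rw [upperShift_pow_apply, single_apply]
  have := j.is_lt
  congr 1
  simp only [Fin.ext_iff, Fin.val_zero, Fin.val_last, eq_iff_iff]
  omega

end upperShift

theorem mul_pow_eq_neg_transpose_pow_mul {ι R : Type*} [Fintype ι] [DecidableEq ι] [Ring R]
    {A N : Matrix ι ι R} (h : Nᵀ * A + A * N = 0) (k : ℕ) : A * N ^ k = (-Nᵀ) ^ k * A := by
  have hsemi : SemiconjBy A N (-Nᵀ) := by
    rw [SemiconjBy, neg_mul, ← sub_eq_zero, sub_neg_eq_add, add_comm, h]
  exact (hsemi.pow_right k).eq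

theorem apply_eq_zero_of_mul_single_eq_neg {ι R : Type*} [Fintype ι] [DecidableEq ι] [Ring R]
    [NoZeroDivisors R] (h2 : (2 : R) ≠ 0) {A : Matrix ι ι R} (hA : Aᵀ = A) {i j : ι}
    (h : A * single i j 1 = -(single j i 1 * A)) (l : ι) : A l i = 0 := by
  have hlj := congrFun (congrFun h l) j
  rw [mul_single_apply_same, mul_one, neg_apply] at hlj
  by_cases hl : l = j
  · subst hl
    have hsymm : A i l = A l i := congrFun (congrFun hA l) i
    rw [single_mul_apply_same, one_mul, hsymm, eq_neg_iff_add_eq_zero, ← two_mul] at hlj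
    exact (mul_eq_zero.mp hlj).resolve_left h2
  · rwa [single_mul_apply_of_ne _ _ _ _ _ hl, neg_zero] at hlj

/-- For the regular nilpotent Jordan block `N` of even size `n ≥ 1`, there is no
invertible symmetric matrix `A` with `Nᵀ A + A N = 0`. -/
theorem no_invariant_quadric_even (K : Type*) [Field K] [CharZero K] (n : ℕ)
    (hn : 0 < n) (hne : Even n)
    (N : Matrix (Fin n) (Fin n) K)
    (hN : N = Matrix.of fun i j : Fin n => if (i : ℕ) + 1 = (j : ℕ) then (1 : K) else 0) :
    ¬ ∃ A : Matrix (Fin n) (Fin n) K, Aᵀ = A ∧ IsUnit A ∧ Nᵀ * A + A * N = 0 := by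
  rintro ⟨A, hsym, hunit, hA⟩
  obtain ⟨m, rfl⟩ : ∃ m, n = m + 1 := ⟨n - 1, by omega⟩
  have hm : Odd m := Nat.not_even_iff_odd.mp (Nat.even_add_one.mp hne)
  have hN' : N = upperShift K (m + 1) := hN
  subst hN'
  have hcorner : A * single 0 (Fin.last m) 1 = -(single (Fin.last m) 0 1 * A) := by
    rw [← upperShift_pow_self, mul_pow_eq_neg_transpose_pow_mul hA, hm.neg_pow, ← transpose_pow,
      upperShift_pow_self, transpose_single, neg_mul]
  have hcol : ∀ l, A l 0 = 0 := apply_eq_zero_of_mul_single_eq_neg two_ne_zero hsym hcorner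
  exact not_isUnit_zero (det_eq_zero_of_column_eq_zero 0 hcol ▸ (isUnit_iff_isUnit_det A).mp hunit)
end

section
/- Let γ = (γ_1,...,γ_k) and τ = (τ_1,...,τ_l) be compositions of n with odd parts, with γ_1 > 1 and τ_1 = 1. If τ ≤ γ in the poset F_n, then τ_1 = τ_2 = ... = τ_{γ_1} = 1, i.e., the first γ_1 parts of τ all equal 1. -/
/-!
A covering step acts inside a single part, so a chain of steps from `γ = g :: rest` to `τ`
splits into a chain from `[g]` and one from `rest`. From a single part `g` the only reachable
lists are `(g - 2j) :: 1^{2j}`; if `τ` starts with `1`, then `g - 2j = 1`, so `τ` begins with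
`g` ones.
-/

/-- `γ` is a composition of `n` into odd parts (parts recorded as a list). -/
def OddComp (n : ℕ) (γ : List ℕ) : Prop :=
  γ.sum = n ∧ ∀ x ∈ γ, Odd x

/-- `CoversF γ ρ`: `ρ` is obtained from `γ` by replacing a part `m > 1`
by the three consecutive parts `m - 2, 1, 1`. -/
def CoversF (γ ρ : List ℕ) : Prop :=
  ∃ (pre post : List ℕ) (m : ℕ), 1 < m ∧
    γ = pre ++ m :: post ∧ ρ = pre ++ (m - 2) :: 1 :: 1 :: post

/-- The partial order on odd-part compositions: the reflexive-transitive
closure of the covering relation. -/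
def leF (ρ γ : List ℕ) : Prop :=
  Relation.ReflTransGen (fun a b => CoversF b a) ρ γ

lemma CoversF.append_cases {a b ρ : List ℕ} (h : CoversF (a ++ b) ρ) :
    (∃ a', ρ = a' ++ b ∧ CoversF a a') ∨ (∃ b', ρ = a ++ b' ∧ CoversF b b') := by
  obtain ⟨pre, post, m, hm, heq, rfl⟩ := h
  rcases List.append_eq_append_iff.mp heq with ⟨l, rfl, hb⟩ | ⟨l, rfl, hl⟩
  · exact .inr ⟨l ++ (m - 2) :: 1 :: 1 :: post, by simp, l, post, m, hm, hb, rfl⟩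
  · cases l with
    | nil =>
      simp only [List.append_nil, List.nil_append] at hl ⊢
      exact .inr ⟨(m - 2) :: 1 :: 1 :: post, rfl, [], post, m, hm, hl.symm, rfl⟩
    | cons x l' =>
      obtain ⟨rfl, rfl⟩ := List.cons_eq_cons.mp hl
      exact .inl ⟨pre ++ (m - 2) :: 1 :: 1 :: l', by simp, pre, l', m, hm, rfl, rfl⟩

lemma reflTransGen_coversF_append {a b τ : List ℕ}
    (h : Relation.ReflTransGen CoversF (a ++ b) τ) :
    ∃ A B, τ = A ++ B ∧ Relation.ReflTransGen CoversF a A ∧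
      Relation.ReflTransGen CoversF b B := by
  generalize hγ : a ++ b = γ at h
  induction h using Relation.ReflTransGen.head_induction_on generalizing a b with
  | refl => exact ⟨a, b, hγ.symm, .refl, .refl⟩
  | head hstep _ ih =>
    subst hγ
    rcases hstep.append_cases with ⟨a', rfl, ha⟩ | ⟨b', rfl, hb⟩
    · obtain ⟨A, B, rfl, hA, hB⟩ := ih rfl
      exact ⟨A, B, rfl, .head ha hA, hB⟩
    · obtain ⟨A, B, rfl, hA, hB⟩ := ih rfl
      exact ⟨A, B, rfl, hA, .head hb hB⟩

lemma reflTransGen_coversF_singleton {g : ℕ} {A : List ℕ}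
    (h : Relation.ReflTransGen CoversF [g] A) :
    ∃ j, 2 * j ≤ g ∧ A = (g - 2 * j) :: List.replicate (2 * j) 1 := by
  induction h with
  | refl => exact ⟨0, by simp, by simp⟩
  | tail _ hstep ih =>
    obtain ⟨j, hj, rfl⟩ := ih
    obtain ⟨pre, post, m, hm, heq, rfl⟩ := hstep
    cases pre with
    | cons x pre' =>
      obtain ⟨-, htail⟩ := List.cons_eq_cons.mp heq
      have hm1 : m ∈ List.replicate (2 * j) 1 := htail ▸ by simp
      rw [List.eq_of_mem_replicate hm1] at hm
      exact absurd hm (lt_irrefl 1)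
    | nil =>
      obtain ⟨rfl, rfl⟩ := List.cons_eq_cons.mp heq
      refine ⟨j + 1, by omega, ?_⟩
      rw [show g - 2 * j - 2 = g - 2 * (j + 1) by omega, show 2 * (j + 1) = 2 * j + 1 + 1 by ring]
      rfl

theorem Fn_initial_ones_general (γ τ : List ℕ)
    (hγ1 : 1 < γ.headI) (hτ1 : τ.headI = 1) (hle : leF τ γ) :
    τ.take γ.headI = List.replicate γ.headI 1 := by
  obtain _ | ⟨g, rest⟩ := γ
  · simp at hγ1
  obtain ⟨A, B, rfl, hA, -⟩ :=
    reflTransGen_coversF_append (a := [g]) (b := rest) (Relation.reflTransGen_swap.mp hle)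
  obtain ⟨j, hj, rfl⟩ := reflTransGen_coversF_singleton hA
  simp only [List.headI, List.cons_append] at hγ1 hτ1 ⊢
  have hA_ones : (g - 2 * j) :: List.replicate (2 * j) 1 = List.replicate g 1 := by
    rw [hτ1, show g = 2 * j + 1 by omega, List.replicate_succ]
  rw [← List.cons_append, hA_ones]
  exact List.take_left' List.length_replicate

/-- If `γ, τ ∈ F_n` with `γ₁ > 1` and `τ₁ = 1`, and `τ ≤ γ`, then the first
`γ₁` parts of `τ` are all equal to `1`. -/
theorem Fn_initial_ones (n : ℕ) (γ τ : List ℕ)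
    (hγ : OddComp n γ) (hτ : OddComp n τ)
    (hγ1 : 1 < γ.headI) (hτ1 : τ.headI = 1) (hle : leF τ γ) :
    τ.take γ.headI = List.replicate γ.headI 1 :=
  Fn_initial_ones_general γ τ hγ1 hτ1 hle
end

section
/- The poset F_n of compositions of n into odd parts (with the order generated by the covering relation where a part m > 1 is replaced by m-2, 1, 1) is a meet-semilattice: any two elements have a greatest lower bound. -/
/-!
Reading odd compositions from the left, `ρ ≤ γ` holds exactly when the first part `c` of `ρ` is
at most the first part `a` of `γ` and the rest of `ρ` lies below `a - c` ones followed by the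
rest of `γ` (`Refines`). This greedy description makes meets explicit: the meet of `a :: α` and
`b :: β` is `min a b` followed by the meet of the two remainders, which have smaller total, so
meets exist by induction on `n`. They are unique because every covering step adds two parts,
so `≤` is antisymmetric.
-/

theorem List.replicate_sub_eq_append {α : Type*} {d c x : ℕ} (hdc : d ≤ c) (hcx : c ≤ x) (y : α) :
    List.replicate (x - d) y = List.replicate (c - d) y ++ List.replicate (x - c) y := by
  rw [List.replicate_append_replicate]
  congr 1
  omega

theorem List.sum_replicate_one_append (k : ℕ) (δ : List ℕ) :
    (List.replicate k 1 ++ δ).sum = k + δ.sum := by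
  simp

inductive Refines : List ℕ → List ℕ → Prop
  | nil : Refines [] []
  | cons {c a : ℕ} {σ γ : List ℕ} :
      c ≤ a → Refines σ (List.replicate (a - c) 1 ++ γ) → Refines (c :: σ) (a :: γ)

namespace Refines

theorem sum_eq {ρ γ : List ℕ} (h : Refines ρ γ) : ρ.sum = γ.sum := by
  induction h with
  | nil => rfl
  | cons hca _ ih =>
    simp only [List.sum_cons, ih, List.sum_replicate_one_append]
    omega

theorem append_left (l : List ℕ) {σ γ : List ℕ} (h : Refines σ γ) :
    Refines (l ++ σ) (l ++ γ) := by
  induction l with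
  | nil => exact h
  | cons x l ih => exact cons le_rfl (by simpa using ih)

protected theorem refl (γ : List ℕ) : Refines γ γ := by
  simpa using append_left γ nil

protected theorem trans {ρ σ γ : List ℕ} (h₁ : Refines ρ σ) (h₂ : Refines σ γ) :
    Refines ρ γ := by
  induction h₁ generalizing γ with
  | nil => exact h₂
  | @cons r s ρ' σ' hrs _ ih =>
    obtain _ | ⟨hsg, h₂'⟩ := h₂
    rename_i g γ'
    refine cons (hrs.trans hsg) (ih ?_)
    rw [List.replicate_sub_eq_append hrs hsg, List.append_assoc]
    exact append_left _ h₂'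

theorem of_covers {γ ρ : List ℕ} (h : CoversF γ ρ) : Refines ρ γ := by
  obtain ⟨pre, post, m, hm, rfl, rfl⟩ := h
  refine append_left pre (cons (Nat.sub_le m 2) ?_)
  rw [show m - (m - 2) = 2 by omega]
  exact Refines.refl _

theorem eq_replicate_one_append {k : ℕ} {σ γ : List ℕ} (hσ : ∀ x ∈ σ, 0 < x)
    (h : Refines σ (List.replicate k 1 ++ γ)) :
    ∃ σ', σ = List.replicate k 1 ++ σ' ∧ Refines σ' γ := by
  induction k generalizing σ with
  | zero => exact ⟨σ, rfl, h⟩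
  | succ k ih =>
    obtain _ | ⟨hc, h'⟩ := h
    rename_i c σ₀
    obtain rfl : c = 1 := by have := hσ c List.mem_cons_self; omega
    obtain ⟨σ', rfl, hσ'⟩ := ih (fun x hx => hσ x (List.mem_cons_of_mem _ hx)) (by simpa using h')
    exact ⟨σ', rfl, hσ'⟩

theorem tail_eq_replicate_one_append {d c a : ℕ} {σ γ : List ℕ} (hσ : ∀ x ∈ σ, 0 < x)
    (h : Refines (d :: σ) (a :: γ)) (hdc : d ≤ c) (hca : c ≤ a) :
    ∃ σ', σ = List.replicate (c - d) 1 ++ σ' ∧ Refines σ' (List.replicate (a - c) 1 ++ γ) := by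
  obtain _ | ⟨-, h⟩ := h
  rw [List.replicate_sub_eq_append hdc hca, List.append_assoc] at h
  exact h.eq_replicate_one_append hσ

end Refines

theorem forall_mem_replicate_one_append_odd {k : ℕ} {δ : List ℕ} (h : ∀ x ∈ δ, Odd x) :
    ∀ x ∈ List.replicate k 1 ++ δ, Odd x := by
  simp only [List.mem_append, List.mem_replicate]
  rintro x (⟨-, rfl⟩ | hx)
  exacts [odd_one, h x hx]

theorem leF.refines {ρ γ : List ℕ} (h : leF ρ γ) : Refines ρ γ := by
  induction h with
  | refl => exact Refines.refl ρ
  | tail _ hcov ih => exact ih.trans (Refines.of_covers hcov)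

theorem CoversF.cons (x : ℕ) {γ ρ : List ℕ} (h : CoversF γ ρ) : CoversF (x :: γ) (x :: ρ) := by
  obtain ⟨pre, post, m, hm, rfl, rfl⟩ := h
  exact ⟨x :: pre, post, m, hm, rfl, rfl⟩

theorem leF.cons (x : ℕ) {ρ γ : List ℕ} (h : leF ρ γ) : leF (x :: ρ) (x :: γ) :=
  Relation.ReflTransGen.lift (p := fun a b => CoversF b a) (x :: ·)
    (fun _ _ => CoversF.cons x) _ _ h

theorem leF_cons_replicate_one_append {c a : ℕ} (hca : c ≤ a) (heven : Even (a - c))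
    (γ : List ℕ) : leF (c :: (List.replicate (a - c) 1 ++ γ)) (a :: γ) := by
  obtain ⟨k, hk⟩ := heven
  obtain rfl : a = c + 2 * k := by omega
  rw [Nat.add_sub_cancel_left]
  clear hca hk
  induction k generalizing c with
  | zero => exact Relation.ReflTransGen.refl
  | succ k ih =>
    have hcov : CoversF ((c + 2) :: (List.replicate (2 * k) 1 ++ γ))
        (c :: 1 :: 1 :: (List.replicate (2 * k) 1 ++ γ)) :=
      ⟨[], _, c + 2, by omega, rfl, rfl⟩
    rw [show c + 2 * (k + 1) = c + 2 + 2 * k by ring]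
    exact Relation.ReflTransGen.head hcov ih

theorem Refines.leF {ρ γ : List ℕ} (hρ : ∀ x ∈ ρ, Odd x) (hγ : ∀ x ∈ γ, Odd x)
    (h : Refines ρ γ) : leF ρ γ := by
  induction h with
  | nil => exact Relation.ReflTransGen.refl
  | @cons c a σ γ hca _ ih =>
    have hσ : ∀ x ∈ σ, Odd x := fun x hx => hρ x (List.mem_cons_of_mem _ hx)
    have hrest := forall_mem_replicate_one_append_odd (k := a - c)
      fun x hx => hγ x (List.mem_cons_of_mem _ hx)
    have heven : Even (a - c) :=
      Nat.Odd.sub_odd (hγ a List.mem_cons_self) (hρ c List.mem_cons_self)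
    exact (leF.cons c (ih hσ hrest)).trans (leF_cons_replicate_one_append hca heven γ)

theorem CoversF.length_eq {γ ρ : List ℕ} (h : CoversF γ ρ) : ρ.length = γ.length + 2 := by
  obtain ⟨pre, post, m, -, rfl, rfl⟩ := h
  simp only [List.length_append, List.length_cons]
  omega

theorem leF.length_le {ρ γ : List ℕ} (h : leF ρ γ) : γ.length ≤ ρ.length := by
  induction h with
  | refl => exact le_rfl
  | tail _ hcov ih => have := hcov.length_eq; omega

theorem leF_antisymm {ρ γ : List ℕ} (h₁ : leF ρ γ) (h₂ : leF γ ρ) : ρ = γ := by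
  rcases Relation.ReflTransGen.cases_head h₁ with rfl | ⟨σ, hcov, hσ⟩
  · rfl
  · have := hcov.length_eq
    have := leF.length_le hσ
    have := h₂.length_le
    omega

theorem exists_refines_glb (n : ℕ) (γ ρ : List ℕ) (hγ : ∀ x ∈ γ, Odd x)
    (hρ : ∀ x ∈ ρ, Odd x) (hγn : γ.sum = n) (hρn : ρ.sum = n) :
    ∃ μ, (∀ x ∈ μ, Odd x) ∧ Refines μ γ ∧ Refines μ ρ ∧
      ∀ τ, (∀ x ∈ τ, 0 < x) → Refines τ γ → Refines τ ρ → Refines τ μ := by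
  induction n using Nat.strong_induction_on generalizing γ ρ with
  | _ n ih =>
  match γ, ρ with
  | [], [] => exact ⟨[], by simp, .nil, .nil, fun _ _ h _ => h⟩
  | [], _ :: _ | _ :: _, [] =>
    clear ih
    simp only [List.forall_mem_cons, List.sum_cons, List.sum_nil, Nat.odd_iff] at *
    omega
  | a :: α, b :: β =>
    simp only [List.forall_mem_cons, List.sum_cons] at hγ hρ hγn hρn
    have hc : Odd (min a b) := by rcases min_choice a b with h | h <;> rw [h]; exacts [hγ.1, hρ.1]
    set c := min a b
    obtain ⟨μ, hμ, hμγ, hμρ, hμ_glb⟩ :=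
      ih (n - c) (by have := hc.pos; omega) (List.replicate (a - c) 1 ++ α)
        (List.replicate (b - c) 1 ++ β)
        (forall_mem_replicate_one_append_odd hγ.2) (forall_mem_replicate_one_append_odd hρ.2)
        (by simp only [List.sum_replicate_one_append]; omega)
        (by simp only [List.sum_replicate_one_append]; omega)
    refine ⟨c :: μ, List.forall_mem_cons.2 ⟨hc, hμ⟩, .cons (min_le_left a b) hμγ,
      .cons (min_le_right a b) hμρ, ?_⟩
    rintro (_ | ⟨d, σ⟩) hτ hτγ hτρ
    · cases hτγ
    have hdc : d ≤ c := le_min (by cases hτγ; assumption) (by cases hτρ; assumption)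
    have hσ : ∀ x ∈ σ, 0 < x := fun x hx => hτ x (List.mem_cons_of_mem _ hx)
    obtain ⟨σ₁, rfl, h₁⟩ := hτγ.tail_eq_replicate_one_append hσ hdc (min_le_left a b)
    obtain ⟨σ₂, hσ₁₂, h₂⟩ := hτρ.tail_eq_replicate_one_append hσ hdc (min_le_right a b)
    obtain rfl := List.append_cancel_left hσ₁₂
    have hσ₁ : ∀ x ∈ σ₁, 0 < x := fun x hx => hσ x (List.mem_append_right _ hx)
    exact .cons hdc (.append_left _ (hμ_glb σ₁ hσ₁ h₁ h₂))

/-- The poset `F_n` is a meet-semilattice: any two elements have a unique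
greatest lower bound. -/
theorem Fn_meet_semilattice (n : ℕ) (γ ρ : List ℕ)
    (hγ : OddComp n γ) (hρ : OddComp n ρ) :
    ∃! μ : List ℕ, OddComp n μ ∧ leF μ γ ∧ leF μ ρ ∧
      ∀ τ : List ℕ, OddComp n τ → leF τ γ → leF τ ρ → leF τ μ := by
  obtain ⟨μ, hμ, hμγ, hμρ, hμ_glb⟩ := exists_refines_glb n γ ρ hγ.2 hρ.2 hγ.1 hρ.1
  have hμn : OddComp n μ := ⟨hμγ.sum_eq.trans hγ.1, hμ⟩
  have hglb : ∀ τ : List ℕ, OddComp n τ → leF τ γ → leF τ ρ → leF τ μ :=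
    fun τ hτ hτγ hτρ =>
      (hμ_glb τ (fun x hx => (hτ.2 x hx).pos) hτγ.refines hτρ.refines).leF hτ.2 hμ
  refine ⟨μ, ⟨hμn, hμγ.leF hμ hγ.2, hμρ.leF hμ hρ.2, hglb⟩, ?_⟩
  rintro ν ⟨hνn, hνγ, hνρ, hν_glb⟩
  exact leF_antisymm (hglb ν hνn hνγ hνρ) (hν_glb μ hμn (hμγ.leF hμ hγ.2) (hμρ.leF hμ hρ.2))
end

section
/- An odd-part composition γ of n is maximal in the poset F_n if and only if γ contains no two consecutive parts equal to 1, except possibly two consecutive 1's at the very beginning of γ. -/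
/-!
Two consecutive ones preceded by a part `a` merge back into the odd part `a + 2`, giving a
strictly larger element; conversely every covering step creates two consecutive ones preceded by
a part.
-/

lemma List.exists_eq_take_append_cons_cons_cons {α : Type*} {l : List α} {i : ℕ} {b c : α}
    (hb : l[i + 1]? = some b) (hc : l[i + 2]? = some c) :
    ∃ a, l = l.take i ++ a :: b :: c :: l.drop (i + 3) := by
  obtain ⟨hlt, rfl⟩ := List.getElem?_eq_some_iff.mp hc
  obtain ⟨_, rfl⟩ := List.getElem?_eq_some_iff.mp hb
  refine ⟨l[i], ?_⟩
  conv_lhs => rw [← List.take_append_drop i l, List.drop_eq_getElem_cons (by omega),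
    List.drop_eq_getElem_cons (by omega), List.drop_eq_getElem_cons hlt]

lemma CoversF.exists_getElem?_eq_one {γ ρ : List ℕ} (h : CoversF γ ρ) :
    ∃ i, ρ[i + 1]? = some 1 ∧ ρ[i + 2]? = some 1 := by
  obtain ⟨pre, post, m, -, -, rfl⟩ := h
  exact ⟨pre.length, by simp⟩

lemma coversF_append_cons (pre post : List ℕ) (a : ℕ) :
    CoversF (pre ++ (a + 2) :: post) (pre ++ a :: 1 :: 1 :: post) :=
  ⟨pre, post, a + 2, by omega, rfl, rfl⟩

lemma OddComp.merge_ones {n a : ℕ} {pre post : List ℕ}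
    (h : OddComp n (pre ++ a :: 1 :: 1 :: post)) : OddComp n (pre ++ (a + 2) :: post) := by
  obtain ⟨hsum, hodd⟩ := h
  refine ⟨by simp only [List.sum_append, List.sum_cons] at hsum ⊢; omega, fun x hx => ?_⟩
  simp only [List.mem_append, List.mem_cons] at hx hodd
  rcases hx with hx | rfl | hx
  · exact hodd x (.inl hx)
  · exact (hodd a (.inr (.inl rfl))).add_even even_two
  · exact hodd x (.inr (.inr (.inr (.inr hx))))

/-- `γ ∈ F_n` is maximal iff it has no two consecutive parts equal to `1`,
except possibly two consecutive `1`'s at the very beginning. -/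
theorem Fn_maximal_iff (n : ℕ) (γ : List ℕ) (hγ : OddComp n γ) :
    (∀ ρ : List ℕ, OddComp n ρ → leF γ ρ → ρ = γ) ↔
    (∀ i : ℕ, γ[i]? = some 1 → γ[i + 1]? = some 1 → i = 0) := by
  constructor
  · intro hmax i h₁ h₂
    cases i with
    | zero => rfl
    | succ j =>
      obtain ⟨a, hdec⟩ := List.exists_eq_take_append_cons_cons_cons h₁ h₂
      rw [hdec] at hγ hmax
      have := congrArg List.length <| hmax _ hγ.merge_ones (.single (coversF_append_cons ..))
      simp at this
  · intro hno ρ _ hle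
    rcases hle.cases_head with h | ⟨_, hcov, -⟩
    · exact h.symm
    · obtain ⟨i, h₁, h₂⟩ := hcov.exists_getElem?_eq_one
      exact absurd (hno (i + 1) h₁ h₂) i.succ_ne_zero
end

section
/- For n ≥ 2, the number of odd-part compositions of n which have no two consecutive parts equal to 1 except possibly at the beginning equals the number of compositions of n - 2 into parts 1 and 2 with no two consecutive 2's. -/
/-!
Both counts satisfy `x (k + 4) = x (k + 2) + x (k + 1) + x k` with initial values `1, 1, 2, 3`.
An odd composition of `n + 2` without adjacent `1`s after its first part begins with zero, one
or two `1`s followed by an odd composition without adjacent `1`s that does not begin with `1`;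
lowering the first part of the latter by `2` identifies those of size `k + 3` with the odd
compositions of `k + 1` of the original kind, which gives the recurrence. A `{1,2}`-composition
of `m + 3` without adjacent `2`s begins with `1` or with `2, 1`, so these satisfy
`x (m + 3) = x (m + 2) + x m`, which implies the same recurrence.
-/

namespace List

variable {α : Type*}

def NoAdjacent (a : α) (l : List α) : Prop := l.IsChain (fun x y => x = a → y ≠ a)

variable {a x : α} {l : List α}

theorem noAdjacent_iff_getElem? :
    NoAdjacent a l ↔ ∀ i, l[i]? = some a → l[i + 1]? ≠ some a := by
  rw [NoAdjacent, isChain_iff_getElem]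
  constructor
  · intro h i hi hi1
    obtain ⟨hlt, rfl⟩ := getElem?_eq_some_iff.1 hi1
    exact h i hlt (by simpa [getElem?_eq_getElem (Nat.lt_of_succ_lt hlt)] using hi) rfl
  · intro h i hlt hx hy
    exact h i (getElem?_eq_some_iff.2 ⟨_, hx⟩) (getElem?_eq_some_iff.2 ⟨_, hy⟩)

theorem noAdjacent_tail_iff_getElem? :
    NoAdjacent a l.tail ↔ ∀ i, l[i]? = some a → l[i + 1]? = some a → i = 0 := by
  simp only [noAdjacent_iff_getElem?, getElem?_tail]
  constructor
  · intro h i hi hi1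
    cases i with
    | zero => rfl
    | succ j => exact absurd hi1 (h j hi)
  · intro h i hi hi1
    exact i.succ_ne_zero (h (i + 1) hi hi1)

theorem noAdjacent_cons :
    NoAdjacent a (x :: l) ↔ (x = a → l.head? ≠ some a) ∧ NoAdjacent a l := by
  cases l <;> simp [NoAdjacent]

theorem NoAdjacent.tail (h : NoAdjacent a l) : NoAdjacent a l.tail := IsChain.tail h

theorem eq_nil_of_sum_eq_zero {l : List ℕ} (hpos : ∀ x ∈ l, x ≠ 0) (h : l.sum = 0) : l = [] :=
  eq_nil_iff_forall_not_mem.2 fun x hx => hpos x hx (sum_eq_zero_iff.1 h x hx)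

theorem modifyHead_injective {f : α → α} (hf : f.Injective) : (modifyHead f).Injective := by
  rintro (_ | ⟨x, s⟩) (_ | ⟨y, t⟩) h <;> simp_all [hf.eq_iff]

end List

open List

theorem encard_union_image_cons {α : Type*} {a : α} {S T : Set (List α)}
    (hT : ∀ l ∈ T, l.head? ≠ some a) : (T ∪ (a :: ·) '' S).encard = T.encard + S.encard := by
  have hdisj : Disjoint T ((a :: ·) '' S) := by
    rw [Set.disjoint_right]
    rintro _ ⟨l, -, rfl⟩ hl
    exact hT _ hl rfl
  rw [Set.encard_union_eq hdisj, cons_injective.encard_image]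

def oddNoAdj (n : ℕ) : Set (List ℕ) := {l | l.sum = n ∧ (∀ x ∈ l, Odd x) ∧ NoAdjacent 1 l}

def oddNoAdjTail (n : ℕ) : Set (List ℕ) :=
  {l | l.sum = n ∧ (∀ x ∈ l, Odd x) ∧ NoAdjacent 1 l.tail}

def oddNoAdjHeadNe (n : ℕ) : Set (List ℕ) := {l ∈ oddNoAdj n | l.head? ≠ some 1}

def oneTwoNoAdj (m : ℕ) : Set (List ℕ) :=
  {l | l.sum = m ∧ (∀ x ∈ l, x = 1 ∨ x = 2) ∧ NoAdjacent 2 l}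

def oneTwoNoAdjHeadNe (m : ℕ) : Set (List ℕ) := {l ∈ oneTwoNoAdj m | l.head? ≠ some 2}

theorem oddNoAdjTail_succ (n : ℕ) :
    oddNoAdjTail (n + 1) = oddNoAdjHeadNe (n + 1) ∪ (1 :: ·) '' oddNoAdj n := by
  ext l
  constructor
  · rintro ⟨hs, ho, hc⟩
    match l with
    | [] => simp at hs
    | x :: t =>
      rw [forall_mem_cons] at ho
      by_cases hx : x = 1
      · subst hx
        exact Or.inr ⟨t, ⟨by simp at hs; omega, ho.2, hc⟩, rfl⟩
      · exact Or.inl ⟨⟨hs, forall_mem_cons.2 ho, noAdjacent_cons.2 ⟨(absurd · hx), hc⟩⟩, by simpa⟩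
  · rintro (⟨⟨hs, ho, hc⟩, -⟩ | ⟨t, ⟨hs, ho, hc⟩, rfl⟩)
    · exact ⟨hs, ho, hc.tail⟩
    · exact ⟨by simp [hs, add_comm], forall_mem_cons.2 ⟨odd_one, ho⟩, hc⟩

theorem oddNoAdj_succ (n : ℕ) :
    oddNoAdj (n + 1) = oddNoAdjHeadNe (n + 1) ∪ (1 :: ·) '' oddNoAdjHeadNe n := by
  ext l
  constructor
  · rintro ⟨hs, ho, hc⟩
    match l with
    | [] => simp at hs
    | x :: t =>
      rw [forall_mem_cons] at ho
      rw [noAdjacent_cons] at hc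
      by_cases hx : x = 1
      · subst hx
        exact Or.inr ⟨t, ⟨⟨by simp at hs; omega, ho.2, hc.2⟩, hc.1 rfl⟩, rfl⟩
      · exact Or.inl ⟨⟨hs, forall_mem_cons.2 ho, noAdjacent_cons.2 hc⟩, by simpa⟩
  · rintro (⟨hl, -⟩ | ⟨t, ⟨⟨hs, ho, hc⟩, ht⟩, rfl⟩)
    · exact hl
    · exact ⟨by simp [hs, add_comm], forall_mem_cons.2 ⟨odd_one, ho⟩,
        noAdjacent_cons.2 ⟨fun _ => ht, hc⟩⟩

theorem oddNoAdjHeadNe_add_three (n : ℕ) :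
    oddNoAdjHeadNe (n + 3) = modifyHead (· + 2) '' oddNoAdjTail (n + 1) := by
  ext l
  constructor
  · rintro ⟨⟨hs, ho, hc⟩, hx⟩
    match l with
    | [] => simp at hs
    | x :: t =>
      rw [forall_mem_cons] at ho
      obtain ⟨k, rfl⟩ := ho.1
      have hk : k ≠ 0 := by rintro rfl; simp at hx
      refine ⟨(2 * (k - 1) + 1) :: t, ⟨?_, forall_mem_cons.2 ⟨by simp, ho.2⟩, hc.tail⟩, ?_⟩
      · simp at hs ⊢; omega
      · simp; omega
  · rintro ⟨_ | ⟨x, t⟩, ⟨hs, ho, hc⟩, rfl⟩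
    · simp at hs
    · rw [forall_mem_cons] at ho
      rw [modifyHead_cons]
      refine ⟨⟨?_, forall_mem_cons.2 ⟨ho.1.add_even even_two, ho.2⟩,
        noAdjacent_cons.2 ⟨fun h => absurd h (by omega), hc⟩⟩, by simp⟩
      simp at hs ⊢; omega

theorem oddNoAdj_zero : oddNoAdj 0 = {[]} := by
  ext l
  constructor
  · rintro ⟨hs, ho, -⟩
    exact eq_nil_of_sum_eq_zero (fun x hx => (ho x hx).pos.ne') hs
  · rintro rfl
    exact ⟨rfl, by simp, isChain_nil⟩

theorem oddNoAdjHeadNe_zero : oddNoAdjHeadNe 0 = {[]} := by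
  ext l
  simp +contextual [oddNoAdjHeadNe, oddNoAdj_zero]

theorem oddNoAdjHeadNe_eq_empty {n : ℕ} (hn : n < 2) : oddNoAdjHeadNe (n + 1) = ∅ := by
  refine Set.eq_empty_of_forall_notMem ?_
  rintro (_ | ⟨x, t⟩) ⟨⟨hs, ho, -⟩, hx⟩
  · simp at hs
  · obtain ⟨k, rfl⟩ := ho _ mem_cons_self
    simp at hs hx
    omega

theorem oneTwoNoAdj_add_two (m : ℕ) :
    oneTwoNoAdj (m + 2) = oneTwoNoAdjHeadNe (m + 2) ∪ (2 :: ·) '' oneTwoNoAdjHeadNe m := by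
  ext l
  constructor
  · rintro ⟨hs, ho, hc⟩
    match l with
    | [] => simp at hs
    | x :: t =>
      rw [forall_mem_cons] at ho
      rw [noAdjacent_cons] at hc
      rcases ho.1 with rfl | rfl
      · exact Or.inl ⟨⟨hs, forall_mem_cons.2 ho, noAdjacent_cons.2 hc⟩, by simp⟩
      · exact Or.inr ⟨t, ⟨⟨by simp at hs; omega, ho.2, hc.2⟩, hc.1 rfl⟩, rfl⟩
  · rintro (⟨hl, -⟩ | ⟨t, ⟨⟨hs, ho, hc⟩, ht⟩, rfl⟩)
    · exact hl
    · exact ⟨by simp [hs, add_comm], forall_mem_cons.2 ⟨Or.inr rfl, ho⟩,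
        noAdjacent_cons.2 ⟨fun _ => ht, hc⟩⟩

theorem oneTwoNoAdjHeadNe_succ (m : ℕ) :
    oneTwoNoAdjHeadNe (m + 1) = (1 :: ·) '' oneTwoNoAdj m := by
  ext l
  constructor
  · rintro ⟨⟨hs, ho, hc⟩, hx⟩
    match l with
    | [] => simp at hs
    | x :: t =>
      rw [forall_mem_cons] at ho
      obtain rfl : x = 1 := ho.1.resolve_right (by simpa using hx)
      exact ⟨t, ⟨by simp at hs; omega, ho.2, hc.tail⟩, rfl⟩
  · rintro ⟨t, ⟨hs, ho, hc⟩, rfl⟩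
    exact ⟨⟨by simp [hs, add_comm], forall_mem_cons.2 ⟨Or.inl rfl, ho⟩,
      noAdjacent_cons.2 ⟨fun h => absurd h (by omega), hc⟩⟩, by simp⟩

theorem oneTwoNoAdj_zero : oneTwoNoAdj 0 = {[]} := by
  ext l
  constructor
  · rintro ⟨hs, ho, -⟩
    exact eq_nil_of_sum_eq_zero (fun x hx => by rcases ho x hx with rfl | rfl <;> simp) hs
  · rintro rfl
    exact ⟨rfl, by simp, isChain_nil⟩

theorem oneTwoNoAdjHeadNe_zero : oneTwoNoAdjHeadNe 0 = {[]} := by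
  ext l
  simp +contextual [oneTwoNoAdjHeadNe, oneTwoNoAdj_zero]

theorem oneTwoNoAdj_one : oneTwoNoAdj 1 = {[1]} := by
  ext l
  constructor
  · rintro ⟨hs, ho, -⟩
    match l with
    | [] => simp at hs
    | x :: t =>
      rw [forall_mem_cons] at ho
      have hx : x ≤ 1 := by simp at hs; omega
      obtain rfl : x = 1 := by rcases ho.1 with rfl | rfl <;> omega
      obtain rfl : t = [] := by
        refine eq_nil_of_sum_eq_zero (fun y hy => ?_) (by simpa using hs)
        rcases ho.2 y hy with rfl | rfl <;> simp
      rfl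
  · rintro rfl
    exact ⟨rfl, by simp, isChain_singleton _⟩

theorem encard_oddNoAdjTail_succ (n : ℕ) :
    (oddNoAdjTail (n + 1)).encard = (oddNoAdjHeadNe (n + 1)).encard + (oddNoAdj n).encard := by
  rw [oddNoAdjTail_succ, encard_union_image_cons fun _ hl => hl.2]

theorem encard_oddNoAdj_succ (n : ℕ) :
    (oddNoAdj (n + 1)).encard = (oddNoAdjHeadNe (n + 1)).encard + (oddNoAdjHeadNe n).encard := by
  rw [oddNoAdj_succ, encard_union_image_cons fun _ hl => hl.2]

theorem encard_oddNoAdjHeadNe_add_three (n : ℕ) :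
    (oddNoAdjHeadNe (n + 3)).encard = (oddNoAdjTail (n + 1)).encard := by
  rw [oddNoAdjHeadNe_add_three, (modifyHead_injective (add_left_injective 2)).encard_image]

theorem encard_oddNoAdjTail_add_six (n : ℕ) :
    (oddNoAdjTail (n + 6)).encard =
      (oddNoAdjTail (n + 4)).encard + (oddNoAdjTail (n + 3)).encard +
        (oddNoAdjTail (n + 2)).encard := by
  rw [encard_oddNoAdjTail_succ, encard_oddNoAdj_succ, encard_oddNoAdjHeadNe_add_three,
    encard_oddNoAdjHeadNe_add_three, encard_oddNoAdjHeadNe_add_three]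
  exact (add_assoc _ _ _).symm

theorem encard_oneTwoNoAdjHeadNe_succ (m : ℕ) :
    (oneTwoNoAdjHeadNe (m + 1)).encard = (oneTwoNoAdj m).encard := by
  rw [oneTwoNoAdjHeadNe_succ, cons_injective.encard_image]

theorem encard_oneTwoNoAdj_add_two (m : ℕ) :
    (oneTwoNoAdj (m + 2)).encard =
      (oneTwoNoAdj (m + 1)).encard + (oneTwoNoAdjHeadNe m).encard := by
  rw [oneTwoNoAdj_add_two, encard_union_image_cons fun _ hl => hl.2,
    encard_oneTwoNoAdjHeadNe_succ]

theorem encard_oneTwoNoAdj_add_three (m : ℕ) :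
    (oneTwoNoAdj (m + 3)).encard = (oneTwoNoAdj (m + 2)).encard + (oneTwoNoAdj m).encard := by
  rw [encard_oneTwoNoAdj_add_two, encard_oneTwoNoAdjHeadNe_succ]

theorem encard_oneTwoNoAdj_add_four (m : ℕ) :
    (oneTwoNoAdj (m + 4)).encard =
      (oneTwoNoAdj (m + 2)).encard + (oneTwoNoAdj (m + 1)).encard + (oneTwoNoAdj m).encard := by
  rw [encard_oneTwoNoAdj_add_three, encard_oneTwoNoAdj_add_three, add_right_comm]

theorem encard_oddNoAdjTail_add_two (m : ℕ) :
    (oddNoAdjTail (m + 2)).encard = (oneTwoNoAdj m).encard := by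
  let E : LinearRecurrence ℕ∞ := ⟨4, ![1, 1, 1, 0]⟩
  have hsol (u : ℕ → ℕ∞) (hu : ∀ n, u (n + 4) = u (n + 2) + u (n + 1) + u n) : E.IsSolution u := by
    intro n
    simp [E, Fin.sum_univ_four, hu, add_comm, add_left_comm, add_assoc]
  have hA := hsol (fun k => (oddNoAdjTail (k + 2)).encard) encard_oddNoAdjTail_add_six
  have hB := hsol (fun k => (oneTwoNoAdj k).encard) encard_oneTwoNoAdj_add_four
  refine congrFun ((E.eq_iff_eqOn_range_order _ _ hA hB).2 ?_) m
  intro n hn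
  simp only [E, Finset.coe_range, Set.mem_Iio] at hn
  interval_cases n <;> simp [encard_oddNoAdjTail_succ, encard_oddNoAdj_succ,
    encard_oddNoAdjHeadNe_add_three, oddNoAdjHeadNe_eq_empty, oddNoAdjHeadNe_zero, oddNoAdj_zero,
    encard_oneTwoNoAdj_add_two, encard_oneTwoNoAdjHeadNe_succ, oneTwoNoAdjHeadNe_zero,
    oneTwoNoAdj_zero, oneTwoNoAdj_one, add_assoc]

/-- For `n ≥ 2`, the number of odd-part compositions of `n` with no two
consecutive parts equal to `1` except possibly at the beginning equals the
number of compositions of `n - 2` into parts `1` and `2` with no two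
consecutive `2`'s. -/
theorem odd_comps_eq_onetwo_comps (n : ℕ) (hn : 2 ≤ n) :
    {γ : List ℕ | γ.sum = n ∧ (∀ x ∈ γ, Odd x) ∧
        ∀ i : ℕ, γ[i]? = some 1 → γ[i + 1]? = some 1 → i = 0}.ncard
      = {γ : List ℕ | γ.sum = n - 2 ∧ (∀ x ∈ γ, x = 1 ∨ x = 2) ∧
        ∀ i : ℕ, γ[i]? = some 2 → γ[i + 1]? ≠ some 2}.ncard := by
  obtain ⟨m, rfl⟩ := Nat.exists_eq_add_of_le' hn
  simp_rw [← noAdjacent_tail_iff_getElem?, ← noAdjacent_iff_getElem?, Nat.add_sub_cancel]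
  exact congrArg ENat.toNat (encard_oddNoAdjTail_add_two m)
end
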